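/- For any L, R > 0, h > 0, N ∈ ℕ, d ∈ ℕ, define φ₁(x) = (LR/(2Nh+1))‖x‖ − LR²/(2(2Nh+1)²) if ‖x‖ ≥ R/(2Nh+1), and φ₁(x) = (L/2)‖x‖² if ‖x‖ < R/(2Nh+1). Then φ₁ is convex, continuously differentiable with L-Lipschitz gradient, has minimal value 0 attained at 0, and applying the gradient method x_{i+1} = x_i − (h/L)∇φ₁(x_i) from x₀ = Rν (ν a unit vector) yields φ₁(x_N) − min φ₁ = LR²/(4Nh+2). -/

import Mathlib

/-- The worst-case function φ₁ for the gradient method: the Moreau envelope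
of x ↦ (LR/(2Nh+1))‖x‖. -/
noncomputable def phi1 (d : ℕ) (L R h : ℝ) (N : ℕ)
    (x : EuclideanSpace ℝ (Fin d)) : ℝ :=
  if R / (2 * N * h + 1) ≤ ‖x‖ then
    L * R / (2 * N * h + 1) * ‖x‖ - L * R ^ 2 / (2 * (2 * N * h + 1) ^ 2)
  else L / 2 * ‖x‖ ^ 2

/-!
With `c = R / (2Nh+1)`, `φ₁` is the Huber function `H` of threshold `c` and slope `L c`, whose
gradient is `L` times the projection onto the ball of radius `c`. A case analysis on `‖y‖`, `‖z‖`
versus `c` gives the first-order sandwich `0 ≤ H z - H y - ⟪∇H y, z - y⟫ ≤ L/2 ‖z - y‖²`, which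
alone yields differentiability, convexity and, by co-coercivity, the `L`-Lipschitz gradient.
From `Rν` the iterates stay outside the ball, where `∇H` is the constant `L c ν`; hence
`x_N = (R - N h c) ν = (N h + 1) c ν` and `H x_N = L R² / (4 N h + 2)`.
-/

open Set Asymptotics
open scoped RealInnerProductSpace

section FirstOrderBounds

variable {F : Type*} [NormedAddCommGroup F] [InnerProductSpace ℝ F] {f : F → ℝ} {g : F → F}

theorem convexOn_univ_of_add_inner_le (hg : ∀ y z, f y + ⟪g y, z - y⟫ ≤ f z) :
    ConvexOn ℝ univ f := by
  refine ⟨convex_univ, fun p _ q _ a b ha hb hab => ?_⟩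
  set w := a • p + b • q
  have hw : a * ⟪g w, p - w⟫ + b * ⟪g w, q - w⟫ = 0 := by
    rw [← inner_smul_right, ← inner_smul_right, ← inner_add_right, smul_sub, smul_sub,
      sub_add_sub_comm, ← add_smul, hab, one_smul, sub_self, inner_zero_right]
  have hp := mul_le_mul_of_nonneg_left (hg w p) ha
  have hq := mul_le_mul_of_nonneg_left (hg w q) hb
  have hfw : (a + b) * f w = f w := by rw [hab, one_mul]
  simp only [smul_eq_mul]
  linarith

theorem hasGradientAt_of_abs_sub_sub_inner_le [CompleteSpace F] {x g' : F} (C : ℝ)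
    (h : ∀ y, |f y - f x - ⟪g', y - x⟫| ≤ C * ‖y - x‖ ^ 2) : HasGradientAt f g' x := by
  rw [hasGradientAt_iff_isLittleO]
  refine IsBigO.trans_isLittleO (IsBigO.of_bound C (Filter.Eventually.of_forall fun y => ?_))
    (isLittleO_pow_sub_sub x one_lt_two)
  simpa using h y

/-- Co-coercivity: the lower bound at `y`, evaluated at the gradient step from `z`, combines with
the upper bound at `z`. -/
theorem add_inner_add_norm_sq_div_le {L : ℝ} (hL : 0 < L)
    (hlow : ∀ y z, f y + ⟪g y, z - y⟫ ≤ f z)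
    (hup : ∀ y z, f z ≤ f y + ⟪g y, z - y⟫ + L / 2 * ‖z - y‖ ^ 2) (y z : F) :
    f y + ⟪g y, z - y⟫ + ‖g z - g y‖ ^ 2 / (2 * L) ≤ f z := by
  set d := g z - g y
  have hstep := hup z (z - L⁻¹ • d)
  have hsupp := hlow y (z - L⁻¹ • d)
  have hd : ⟪g z, d⟫ - ⟪g y, d⟫ = ‖d‖ ^ 2 := by
    rw [← inner_sub_left, real_inner_self_eq_norm_sq]
  rw [sub_sub_cancel_left, norm_neg, norm_smul, inner_neg_right, inner_smul_right,
    Real.norm_of_nonneg (inv_nonneg.2 hL.le)] at hstep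
  rw [sub_right_comm, inner_sub_right, inner_smul_right] at hsupp
  have hquad : L / 2 * (L⁻¹ * ‖d‖) ^ 2 = ‖d‖ ^ 2 / (2 * L) := by field_simp
  have hlin : L⁻¹ * ⟪g z, d⟫ - L⁻¹ * ⟪g y, d⟫ = ‖d‖ ^ 2 / (2 * L) + ‖d‖ ^ 2 / (2 * L) := by
    rw [← mul_sub, hd]; field_simp; ring
  linarith

theorem norm_sub_le_of_add_inner_le_of_le_add_inner_add_sq {L : ℝ} (hL : 0 < L)
    (hlow : ∀ y z, f y + ⟪g y, z - y⟫ ≤ f z)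
    (hup : ∀ y z, f z ≤ f y + ⟪g y, z - y⟫ + L / 2 * ‖z - y‖ ^ 2) (y z : F) :
    ‖g y - g z‖ ≤ L * ‖y - z‖ := by
  have hyz := add_inner_add_norm_sq_div_le hL hlow hup y z
  have hzy := add_inner_add_norm_sq_div_le hL hlow hup z y
  rw [norm_sub_rev (g z)] at hyz
  have hinner : ⟪g y, z - y⟫ + ⟪g z, y - z⟫ = -⟪g y - g z, y - z⟫ := by
    rw [inner_sub_left, ← neg_sub y z, inner_neg_right]; ring
  have hmono : ‖g y - g z‖ ^ 2 / L ≤ ⟪g y - g z, y - z⟫ := by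
    have : ‖g y - g z‖ ^ 2 / L = 2 * (‖g y - g z‖ ^ 2 / (2 * L)) := by field_simp
    linarith
  rw [div_le_iff₀' hL] at hmono
  have hcs := mul_le_mul_of_nonneg_left (real_inner_le_norm (g y - g z) (y - z)) hL.le
  nlinarith [norm_nonneg (g y - g z), mul_nonneg hL.le (norm_nonneg (y - z))]

end FirstOrderBounds

section Huber

variable {F : Type*} [NormedAddCommGroup F] {L c : ℝ}

noncomputable def huber (L c : ℝ) (y : F) : ℝ :=
  if c ≤ ‖y‖ then L * c * ‖y‖ - L * c ^ 2 / 2 else L / 2 * ‖y‖ ^ 2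

theorem huber_zero (hc : 0 < c) : huber L c (0 : F) = 0 := by
  simp [huber, hc.not_ge]

variable [InnerProductSpace ℝ F]

/-- `L` times the projection of `y` onto the closed ball of radius `c`. -/
noncomputable def huberGrad (L c : ℝ) (y : F) : F :=
  if c ≤ ‖y‖ then (L * c / ‖y‖) • y else L • y

theorem inner_huberGrad_sub (hc : 0 < c) (y z : F) :
    ⟪huberGrad L c y, z - y⟫ =
      if c ≤ ‖y‖ then L * c * (⟪y, z⟫ / ‖y‖) - L * c * ‖y‖ else L * (⟪y, z⟫ - ‖y‖ ^ 2) := by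
  unfold huberGrad
  split_ifs with hy
  · have : ‖y‖ ≠ 0 := (hc.trans_le hy).ne'
    rw [inner_smul_left, inner_sub_right, real_inner_self_eq_norm_sq]
    simp only [conj_trivial]
    field_simp
  · rw [inner_smul_left, inner_sub_right, real_inner_self_eq_norm_sq]
    simp

theorem real_inner_div_norm_le (y z : F) : ⟪y, z⟫ / ‖y‖ ≤ ‖z‖ :=
  div_le_of_le_mul₀ (norm_nonneg y) (norm_nonneg z)
    (by rw [mul_comm]; exact real_inner_le_norm y z)

theorem huber_add_inner_le (hL : 0 ≤ L) (hc : 0 < c) (y z : F) :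
    huber L c y + ⟪huberGrad L c y, z - y⟫ ≤ huber L c z := by
  have hp := mul_le_mul_of_nonneg_left (real_inner_le_norm y z) hL
  have hq := mul_le_mul_of_nonneg_left (real_inner_div_norm_le y z) (mul_nonneg hL hc.le)
  rw [inner_huberGrad_sub hc]
  unfold huber
  split_ifs with hy hz hz
  · linarith
  · nlinarith [mul_nonneg hL (sq_nonneg (c - ‖z‖))]
  · have := mul_nonneg (mul_nonneg hL (sub_nonneg.2 (not_le.1 hy).le)) (sub_nonneg.2 hz)
    nlinarith [mul_nonneg hL (sq_nonneg (c - ‖y‖))]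
  · nlinarith [mul_nonneg hL (sq_nonneg (‖z‖ - ‖y‖))]

theorem huber_le_add_inner_add_sq (hL : 0 ≤ L) (hc : 0 < c) (y z : F) :
    huber L c z ≤ huber L c y + ⟪huberGrad L c y, z - y⟫ + L / 2 * ‖z - y‖ ^ 2 := by
  have hq := sub_nonneg.2 (real_inner_div_norm_le y z)
  have hys : c ≤ ‖y‖ → ⟪y, z⟫ = ⟪y, z⟫ / ‖y‖ * ‖y‖ := fun hy =>
    (div_mul_cancel₀ _ (hc.trans_le hy).ne').symm
  rw [inner_huberGrad_sub hc, norm_sub_sq_real, real_inner_comm y z]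
  unfold huber
  split_ifs with hz hy hy
  · have := mul_nonneg (mul_nonneg hL hq) (sub_nonneg.2 hy)
    nlinarith [hys hy, mul_nonneg hL (sq_nonneg (‖z‖ - ‖y‖))]
  · nlinarith [mul_nonneg hL (sq_nonneg (‖z‖ - c))]
  · have := mul_nonneg (mul_nonneg hL hq) (sub_nonneg.2 hy)
    have := mul_nonneg (mul_nonneg hL (sub_nonneg.2 (not_le.1 hz).le)) (sub_nonneg.2 hy)
    nlinarith [hys hy, mul_nonneg hL (sq_nonneg (‖y‖ - c))]
  · linarith

theorem huberGrad_smul_of_le {r : ℝ} {ν : F} (hc : 0 < c) (hν : ‖ν‖ = 1) (hr : c ≤ r) :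
    huberGrad L c (r • ν) = (L * c) • ν := by
  have hnorm : ‖r • ν‖ = r := by
    rw [norm_smul, hν, mul_one, Real.norm_of_nonneg (hc.le.trans hr)]
  rw [huberGrad, hnorm, if_pos hr, smul_smul, div_mul_cancel₀ _ (hc.trans_le hr).ne']

theorem huber_gradientDescent_eq {h R : ℝ} {ν : F} {x : ℕ → F} {n : ℕ}
    (hL : L ≠ 0) (hc : 0 < c) (hh : 0 ≤ h) (hν : ‖ν‖ = 1) (hn : c + n * h * c ≤ R)
    (hx0 : x 0 = R • ν) (hrec : ∀ i, x (i + 1) = x i - (h / L) • huberGrad L c (x i)) :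
    ∀ i ≤ n, x i = (R - i * h * c) • ν := by
  intro i
  induction i with
  | zero => simpa using hx0
  | succ i ih =>
    intro hi
    have hin : (i : ℝ) + 1 ≤ n := by exact_mod_cast hi
    have hstep : c ≤ R - i * h * c := by nlinarith [mul_nonneg hh hc.le]
    rw [hrec, ih (by omega), huberGrad_smul_of_le hc hν hstep, smul_smul, ← sub_smul]
    congr 1
    field_simp
    push_cast
    ring

variable [CompleteSpace F]

theorem hasGradientAt_huber (hL : 0 ≤ L) (hc : 0 < c) (y : F) :
    HasGradientAt (huber L c) (huberGrad L c y) y :=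
  hasGradientAt_of_abs_sub_sub_inner_le (L / 2) fun z => abs_sub_le_iff.2
    ⟨by linarith [huber_le_add_inner_add_sq hL hc y z],
      by linarith [huber_add_inner_le hL hc y z, mul_nonneg hL (sq_nonneg ‖z - y‖)]⟩

theorem gradient_huber (hL : 0 ≤ L) (hc : 0 < c) :
    gradient (huber L c : F → ℝ) = huberGrad L c :=
  funext fun y => (hasGradientAt_huber hL hc y).gradient

end Huber

theorem phi1_eq_huber (d : ℕ) (L R h : ℝ) (N : ℕ) :
    phi1 d L R h N = huber L (R / (2 * N * h + 1)) := by
  ext y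
  unfold phi1 huber
  generalize 2 * (N : ℝ) * h + 1 = E
  split_ifs <;> ring

theorem phi1_worst_case
    {d : ℕ} (L R h : ℝ) (N : ℕ) (hL : 0 < L) (hR : 0 < R) (hh : 0 < h)
    (ν : EuclideanSpace ℝ (Fin d)) (hν : ‖ν‖ = 1)
    (x : ℕ → EuclideanSpace ℝ (Fin d)) (hx0 : x 0 = R • ν)
    (hrec : ∀ i, x (i + 1) = x i - (h / L) • gradient (phi1 d L R h N) (x i)) :
    ConvexOn ℝ Set.univ (phi1 d L R h N) ∧
    Differentiable ℝ (phi1 d L R h N) ∧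
    (∀ y z, ‖gradient (phi1 d L R h N) y - gradient (phi1 d L R h N) z‖ ≤ L * ‖y - z‖) ∧
    phi1 d L R h N 0 = 0 ∧
    (∀ y, phi1 d L R h N 0 ≤ phi1 d L R h N y) ∧
    phi1 d L R h N (x N) - phi1 d L R h N 0 = L * R ^ 2 / (4 * N * h + 2) := by
  rw [phi1_eq_huber] at hrec ⊢
  have hc : 0 < R / (2 * N * h + 1) := by positivity
  have hRc : R = (2 * N * h + 1) * (R / (2 * N * h + 1)) := by field_simp
  set c := R / (2 * N * h + 1)
  have hNhc : 0 ≤ N * h * c := by positivity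
  rw [gradient_huber hL.le hc] at hrec ⊢
  have hlow := huber_add_inner_le (F := EuclideanSpace ℝ (Fin d)) hL.le hc
  have hup := huber_le_add_inner_add_sq (F := EuclideanSpace ℝ (Fin d)) hL.le hc
  have hxN := huber_gradientDescent_eq (n := N) hL.ne' hc hh.le hν (by linarith) hx0 hrec N le_rfl
  refine ⟨convexOn_univ_of_add_inner_le hlow,
    fun y => (hasGradientAt_huber hL.le hc y).differentiableAt,
    norm_sub_le_of_add_inner_le_of_le_add_inner_add_sq hL hlow hup, huber_zero hc,
    fun y => by simpa [huber_zero hc, huberGrad] using hlow 0 y, ?_⟩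
  have hnorm : ‖x N‖ = (N * h + 1) * c := by
    rw [hxN, norm_smul, hν, mul_one, Real.norm_of_nonneg (by linarith), hRc]; ring
  rw [huber_zero hc, huber, hnorm, if_pos (by linarith), hRc]
  field_simp
  ring
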